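/- arXiv:2601.01876 — 2 statements merged into one kernel-verified Lean document; each statement's English description precedes it below -/
import Mathlib

section
/- Let F be a field whose characteristic does not divide n and which contains a primitive n-th root of unity, and let K/F be a Galois extension whose Galois group Gal(K/F) is cyclic of order k with k dividing n. Then K is a simple radical extension of F: there exists β ∈ K with β^k ∈ F and K = F(β). -/
open IntermediateField

/-- Let `F` be a field whose characteristic does not divide `n` (i.e. `n ≠ 0` in `F`) and
which contains a primitive `n`-th root of unity, and let `K/F` be a Galois extension whose
Galois group is cyclic of order `k` with `k ∣ n`. Then `K` is a simple radical extension of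
`F`: there exists `β ∈ K` with `β^k ∈ F` and `K = F(β)`. -/
theorem cyclic_galois_extension_is_simple_radical
    {F K : Type*} [Field F] [Field K] [Algebra F K]
    {n k : ℕ} (hn : 0 < n) (hchar : (n : F) ≠ 0)
    (ζ : F) (hζ : orderOf ζ = n)
    [FiniteDimensional F K] [IsGalois F K]
    (hcyc : IsCyclic (K ≃ₐ[F] K)) (hcard : Nat.card (K ≃ₐ[F] K) = k) (hk : k ∣ n) :
    ∃ β : K, β ^ k ∈ (algebraMap F K).range ∧ IntermediateField.adjoin F ({β} : Set K) = ⊤ := by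
  have hfin : Module.finrank F K = k := by
    rw [← hcard, IsGalois.card_aut_eq_finrank]
  have hkpos : 0 < k := by
    rw [← hcard]; exact Nat.card_pos
  have hprim : IsPrimitiveRoot ζ n := by
    rw [← hζ]; exact IsPrimitiveRoot.orderOf ζ
  obtain ⟨m, rfl⟩ := hk
  have hprimk : IsPrimitiveRoot (ζ ^ m) k := by
    apply hprim.pow hn (mul_comm k m)
  have hne : (primitiveRoots (Module.finrank F K) F).Nonempty := by
    refine ⟨ζ ^ m, ?_⟩
    rw [hfin, mem_primitiveRoots hkpos]
    exact hprimk
  obtain ⟨α, hα1, hα2⟩ := exists_root_adjoin_eq_top_of_isCyclic F K hne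
  refine ⟨α, ?_, hα2⟩
  rw [hfin] at hα1
  exact hα1
end

section
/- Abel–Ruffini: the quintic polynomial f(x) = x^5 − 80x + 5 ∈ Q[x] is irreducible over Q, its Galois group over Q is isomorphic to the symmetric group S₅, and f is not solvable by radicals. -/
namespace AR

open Function Polynomial Polynomial.Gal Ideal

attribute [local instance] splits_ℚ_ℂ

variable (R : Type*) [CommRing R] (a b : ℕ)

noncomputable def Φ : R[X] :=
  X ^ 5 - C (a : R) * X + C (b : R)

variable {R}

@[simp]
theorem map_Phi {S : Type*} [CommRing S] (f : R →+* S) : (Φ R a b).map f = Φ S a b := by simp [Φ]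

@[simp]
theorem coeff_zero_Phi : (Φ R a b).coeff 0 = (b : R) := by simp [Φ, coeff_X_pow]

@[simp]
theorem coeff_five_Phi : (Φ R a b).coeff 5 = 1 := by
  simp [Φ, coeff_X, coeff_C, -map_natCast]

variable [Nontrivial R]

theorem degree_Phi : (Φ R a b).degree = ((5 : ℕ) : WithBot ℕ) := by
  suffices degree (X ^ 5 - C (a : R) * X) = ((5 : ℕ) : WithBot ℕ) by
    rwa [Φ, degree_add_eq_left_of_degree_lt]
    convert (degree_C_le (R := R)).trans_lt (WithBot.coe_lt_coe.mpr (show 0 < 5 by norm_num))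
    exact this
  rw [degree_sub_eq_left_of_degree_lt] <;> rw [degree_X_pow]
  exact (degree_C_mul_X_le (a : R)).trans_lt (WithBot.coe_lt_coe.mpr (show 1 < 5 by norm_num))

theorem natDegree_Phi : (Φ R a b).natDegree = 5 :=
  natDegree_eq_of_degree_eq_some (degree_Phi a b)

theorem leadingCoeff_Phi : (Φ R a b).leadingCoeff = 1 := by
  rw [Polynomial.leadingCoeff, natDegree_Phi, coeff_five_Phi]

theorem monic_Phi : (Φ R a b).Monic :=
  leadingCoeff_Phi a b

theorem irreducible_Phi (p : ℕ) (hp : p.Prime) (hpa : p ∣ a) (hpb : p ∣ b) (hp2b : ¬p ^ 2 ∣ b) :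
    Irreducible (Φ ℚ a b) := by
  rw [← map_Phi a b (Int.castRingHom ℚ), ← IsPrimitive.Int.irreducible_iff_irreducible_map_cast]
  on_goal 1 =>
    apply irreducible_of_eisenstein_criterion
    · rwa [span_singleton_prime (Int.natCast_ne_zero.mpr hp.ne_zero), Int.prime_iff_natAbs_prime]
    · rw [leadingCoeff_Phi, mem_span_singleton]
      exact mod_cast mt Nat.dvd_one.mp hp.ne_one
    · intro n hn
      rw [mem_span_singleton]
      rw [degree_Phi] at hn; norm_cast at hn
      interval_cases n <;>
      simp +decide only [Φ, coeff_X_pow, coeff_C, Int.natCast_dvd_natCast.mpr,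
        hpb, if_true, coeff_C_mul, if_false, coeff_X_zero, hpa, coeff_add, zero_add, mul_zero,
        coeff_sub, add_zero, zero_sub, dvd_neg, neg_zero, dvd_mul_of_dvd_left]
    · simp only [degree_Phi, ← WithBot.coe_zero, WithBot.coe_lt_coe, Nat.succ_pos']
      decide
    · rw [coeff_zero_Phi, span_singleton_pow, mem_span_singleton]
      exact mt Int.natCast_dvd_natCast.mp hp2b
  all_goals exact Monic.isPrimitive (monic_Phi a b)

attribute [local simp] map_ofNat in
theorem real_roots_Phi_le : Fintype.card ((Φ ℚ a b).rootSet ℝ) ≤ 3 := by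
  rw [← map_Phi a b (algebraMap ℤ ℚ), Φ, ← one_mul (X ^ 5), ← C_1]
  apply (card_rootSet_le_derivative _).trans
    (Nat.succ_le_succ ((card_rootSet_le_derivative _).trans (Nat.succ_le_succ _)))
  suffices (Polynomial.rootSet (C (20 : ℚ) * X ^ 3) ℝ).Subsingleton by
    norm_num [Fintype.card_le_one_iff_subsingleton, ← mul_assoc] at *
    exact this
  rw [rootSet_C_mul_X_pow] <;>
  norm_num

theorem real_roots_Phi_ge_aux (hab : b < a) :
    ∃ x y : ℝ, x ≠ y ∧ aeval x (Φ ℚ a b) = 0 ∧ aeval y (Φ ℚ a b) = 0 := by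
  let f : ℝ → ℝ := fun x : ℝ => aeval x (Φ ℚ a b)
  have hf : f = fun x : ℝ => x ^ 5 - a * x + b := by simp [f, Φ]
  have hc : ∀ s : Set ℝ, ContinuousOn f s := fun s => (Φ ℚ a b).continuousOn_aeval
  have ha : (1 : ℝ) ≤ a := Nat.one_le_cast.mpr (Nat.one_le_of_lt hab)
  have hle : (0 : ℝ) ≤ 1 := zero_le_one
  have hf0 : 0 ≤ f 0 := by simp [hf]
  by_cases hb : (1 : ℝ) - a + b < 0
  · have hf1 : f 1 < 0 := by simp [hf, hb]
    have hfa : 0 ≤ f a := by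
      simp_rw [hf, ← sq]
      refine add_nonneg (sub_nonneg.mpr (pow_right_mono₀ ha ?_)) ?_ <;> norm_num
    obtain ⟨x, ⟨-, hx1⟩, hx2⟩ := intermediate_value_Ico' hle (hc _) (Set.mem_Ioc.mpr ⟨hf1, hf0⟩)
    obtain ⟨y, ⟨hy1, -⟩, hy2⟩ := intermediate_value_Ioc ha (hc _) (Set.mem_Ioc.mpr ⟨hf1, hfa⟩)
    exact ⟨x, y, (hx1.trans hy1).ne, hx2, hy2⟩
  · replace hb : (b : ℝ) = a - 1 := by linarith [show (b : ℝ) + 1 ≤ a from mod_cast hab]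
    have hf1 : f 1 = 0 := by simp [hf, hb]
    have hfa :=
      calc
        f (-a) = (a : ℝ) ^ 2 - (a : ℝ) ^ 5 + b := by
          norm_num [hf, ← sq, sub_eq_add_neg, add_comm, Odd.neg_pow (by decide : Odd 5)]
        _ ≤ (a : ℝ) ^ 2 - (a : ℝ) ^ 3 + (a - 1) := by
          refine add_le_add (sub_le_sub_left (pow_right_mono₀ ha ?_) _) ?_ <;> linarith
        _ = -((a : ℝ) - 1) ^ 2 * (a + 1) := by ring
        _ ≤ 0 := by nlinarith
    have ha' := neg_nonpos.mpr (hle.trans ha)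
    obtain ⟨x, ⟨-, hx1⟩, hx2⟩ := intermediate_value_Icc ha' (hc _) (Set.mem_Icc.mpr ⟨hfa, hf0⟩)
    exact ⟨x, 1, (hx1.trans_lt zero_lt_one).ne, hx2, hf1⟩

theorem real_roots_Phi_ge (hab : b < a) : 2 ≤ Fintype.card ((Φ ℚ a b).rootSet ℝ) := by
  have q_ne_zero : Φ ℚ a b ≠ 0 := (monic_Phi a b).ne_zero
  obtain ⟨x, y, hxy, hx, hy⟩ := real_roots_Phi_ge_aux a b hab
  have key : ↑({x, y} : Finset ℝ) ⊆ (Φ ℚ a b).rootSet ℝ := by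
    simp [Set.insert_subset, mem_rootSet_of_ne q_ne_zero, hx, hy]
  convert Fintype.card_le_of_embedding (Set.embeddingOfSubset _ _ key)
  simp only [Finset.coe_sort_coe, Fintype.card_coe, Finset.card_singleton,
    Finset.card_insert_of_notMem (mt Finset.mem_singleton.mp hxy)]

theorem complex_roots_Phi (h : (Φ ℚ a b).Separable) : Fintype.card ((Φ ℚ a b).rootSet ℂ) = 5 :=
  (card_rootSet_eq_natDegree h (IsAlgClosed.splits _)).trans (natDegree_Phi a b)

theorem gal_Phi (hab : b < a) (h_irred : Irreducible (Φ ℚ a b)) :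
    Bijective (galActionHom (Φ ℚ a b) ℂ) := by
  apply galActionHom_bijective_of_prime_degree' h_irred
  · simp only [natDegree_Phi]; decide
  · rw [complex_roots_Phi a b h_irred.separable, Nat.succ_le_succ_iff]
    exact (real_roots_Phi_le a b).trans (Nat.le_succ 3)
  · simp_rw [complex_roots_Phi a b h_irred.separable, Nat.succ_le_succ_iff]
    exact real_roots_Phi_ge a b hab

end AR

open Polynomial

/-- `E` is a radical extension of `F`: there is a tower of intermediate fields
`F = B₀ ⊆ B₁ ⊆ ⋯ ⊆ B_s = E` in which each `B_{i+1} = B_i(α_i)` for some `α_i` with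
`α_i ^ m_i ∈ B_i` for a positive integer `m_i`. -/
def IsRadicalExtension (F E : Type*) [Field F] [Field E] [Algebra F E] : Prop :=
  ∃ (s : ℕ) (B : Fin (s + 1) → IntermediateField F E),
    B 0 = ⊥ ∧ B (Fin.last s) = ⊤ ∧
      ∀ i : Fin s, ∃ (α : E) (m : ℕ), 0 < m ∧ (α ^ m ∈ B i.castSucc) ∧
        B i.succ = B i.castSucc ⊔ IntermediateField.adjoin F ({α} : Set E)

/-- A polynomial `f ∈ F[x]` is solvable by radicals if `f` splits over some radical
extension of `F`. -/
def SolvableByRadicals (F : Type) [Field F] (f : Polynomial F) : Prop :=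
  ∃ (E : Type) (_ : Field E) (_ : Algebra F E),
    IsRadicalExtension F E ∧ Splits (f.map (algebraMap F E))

open IntermediateField in
private theorem AR.radical_le_solvableByRad {E : Type} [Field E] [Algebra ℚ E]
    (h : IsRadicalExtension ℚ E) : ∀ x : E, x ∈ solvableByRad ℚ E := by
  obtain ⟨s, B, hB0, hBlast, hstep⟩ := h
  have key : ∀ i : Fin (s + 1), B i ≤ solvableByRad ℚ E := by
    intro i
    induction i using Fin.induction with
    | zero => rw [hB0]; exact bot_le
    | succ i ih =>
      obtain ⟨α, m, hm, hmem, heq⟩ := hstep i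
      rw [heq]
      refine sup_le ih ?_
      rw [adjoin_le_iff]
      rintro x hx
      rw [Set.mem_singleton_iff] at hx
      subst hx
      exact solvableByRad.rad_mem hm.ne' (ih hmem)
  intro x
  have hx : x ∈ B (Fin.last s) := by rw [hBlast]; trivial
  exact key _ hx

private theorem AR.phi_eq : (X ^ 5 - 80 * X + 5 : ℚ[X]) = AR.Φ ℚ 80 5 := by
  simp [AR.Φ, map_ofNat]

private noncomputable def AR.permCongrMulEquiv {α β : Type*} (e : α ≃ β) :
    Equiv.Perm α ≃* Equiv.Perm β :=
  { e.permCongr with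
    map_mul' := fun x y => Equiv.ext fun b => by simp [Equiv.permCongr_apply] }



open Polynomial

/-- **Abel–Ruffini.** The quintic `f(x) = x^5 − 80x + 5 ∈ ℚ[x]` is irreducible over `ℚ`, its
Galois group over `ℚ` is isomorphic to the symmetric group `S₅`, and `f` is not solvable by
radicals. -/
theorem abel_ruffini_quintic :
    Irreducible (X ^ 5 - 80 * X + 5 : ℚ[X]) ∧
    Nonempty (((X ^ 5 - 80 * X + 5 : ℚ[X]).SplittingField ≃ₐ[ℚ]
        (X ^ 5 - 80 * X + 5 : ℚ[X]).SplittingField) ≃* Equiv.Perm (Fin 5)) ∧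
    ¬ SolvableByRadicals ℚ (X ^ 5 - 80 * X + 5 : ℚ[X]) := by
  have h_irred : Irreducible (AR.Φ ℚ 80 5) :=
    AR.irreducible_Phi 80 5 5 (by norm_num) ⟨16, rfl⟩ ⟨1, rfl⟩ (by norm_num)
  have hbij := AR.gal_Phi 80 5 (by norm_num) h_irred
  rw [AR.phi_eq]
  refine ⟨h_irred, ⟨(MulEquiv.ofBijective _ hbij).trans (AR.permCongrMulEquiv
      (Fintype.equivFinOfCardEq (AR.complex_roots_Phi 80 5 h_irred.separable)))⟩, ?_⟩
  rintro ⟨E, _, _, hrad, hsplit⟩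
  obtain ⟨x, hx⟩ := hsplit.exists_eval_eq_zero
    (by rw [degree_map, AR.degree_Phi]; exact mt WithBot.coe_eq_coe.mp (by norm_num))
  have hx' : aeval x (AR.Φ ℚ 80 5) = 0 := by rwa [eval_map_algebraMap] at hx
  haveI hs : Group.IsSolvable (AR.Φ ℚ 80 5).Gal :=
    solvableByRad.isSolvable' (AR.radical_le_solvableByRad hrad x) h_irred hx'
  refine Equiv.Perm.not_solvable _ (le_of_eq ?_) (solvable_of_surjective hbij.2)
  rw_mod_cast [Cardinal.mk_fintype, AR.complex_roots_Phi 80 5 h_irred.separable]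
end
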